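/- Let 𝒜 be a strong T₀-family and r ∈ ℝ. If {x_ξ : ξ < ω₁} ⊆ c_00(ω₁) consists of vectors with pairwise disjoint supports and ‖x_ξ‖_𝒜 = r for all ξ, then there exist ξ < η with ‖x_ξ − x_η‖_𝒜 = √2·r, and there exist ξ < η with ‖x_ξ − x_η‖_𝒜 = r. -/

import Mathlib

noncomputable section

/-- The set `ω₁` of countable ordinals, as a type. -/
abbrev Omega1 : Type := Ordinal.ToType (Ordinal.omega 1)

/-- `‖x‖_𝒜 = sup_{A ∈ 𝒜} sqrt (Σ_{α ∈ A} x(α)²)`. -/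
def normA (𝒜 : Set (Finset Omega1)) (x : Omega1 → ℝ) : ℝ :=
  sSup {r : ℝ | ∃ A ∈ 𝒜, r = Real.sqrt (∑ α ∈ A, (x α) ^ 2)}

/-- The supremum norm of `x`. -/
def supNorm (x : Omega1 → ℝ) : ℝ :=
  sSup {r : ℝ | ∃ α : Omega1, r = |x α|}

/-- The ℓ₂ norm of a (finitely supported) `x`. -/
def l2Norm (x : Omega1 → ℝ) : ℝ :=
  Real.sqrt (∑ᶠ α : Omega1, (x α) ^ 2)

/-- `𝒜` is a family of finite subsets of `ω₁` closed under subsets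
and containing all singletons. -/
def IsGoodFamily (𝒜 : Set (Finset Omega1)) : Prop :=
  (∀ A ∈ 𝒜, ∀ B : Finset Omega1, B ⊆ A → B ∈ 𝒜) ∧
    ∀ α : Omega1, ({α} : Finset Omega1) ∈ 𝒜

/-- `𝒜` is a strong T₀-family. -/
def IsStrongT0Family (𝒜 : Set (Finset Omega1)) : Prop :=
  (∀ A ∈ 𝒜, ∀ B : Finset Omega1, B ⊆ A → B ∈ 𝒜) ∧
  (∀ α : Omega1, ({α} : Finset Omega1) ∈ 𝒜) ∧
  (∀ F : Omega1 → Finset Omega1, Function.Injective F →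
    (∀ ξ η : Omega1, ξ ≠ η → Disjoint (F ξ) (F η)) →
    ((∃ ξ η : Omega1, ξ ≠ η ∧
        ∀ α ∈ F ξ, ∀ β ∈ F η, ({α, β} : Finset Omega1) ∉ 𝒜) ∧
     (∃ ξ η : Omega1, ξ ≠ η ∧
        ∀ α ∈ F ξ, ∀ β ∈ F η, ({α, β} : Finset Omega1) ∈ 𝒜))) ∧
  (∀ C : Finset Omega1,
    (∀ α ∈ C, ∀ β ∈ C, α ≠ β → ({α, β} : Finset Omega1) ∈ 𝒜) → C ∈ 𝒜)

/-!
For disjointly supported `y` and `z` one has `(y - z)² = y² + z²` pointwise, so the `𝒜`-norm of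
`y - z` is governed by which pairs `{α, β}` with `α ∈ supp y`, `β ∈ supp z` lie in `𝒜`. If none
does, every `A ∈ 𝒜` meets only one of the supports and `‖y - z‖_𝒜 = max ‖y‖_𝒜 ‖z‖_𝒜`. If all do,
the union of norming sets for `y` and `z` is again in `𝒜` because membership is decided on pairs,
and `‖y - z‖_𝒜² = ‖y‖_𝒜² + ‖z‖_𝒜²`. The T₀-property applied to the supports of the `x_ξ` yields
a pair of each kind.
-/

open Function

instance : Nonempty Omega1 := by
  rw [Ordinal.nonempty_toType_iff]
  exact (Ordinal.omega_pos 1).ne'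

/-- Property (b) of a strong T₀-family. -/
def IsDeterminedByPairs (𝒜 : Set (Finset Omega1)) : Prop :=
  ∀ C : Finset Omega1,
    (∀ α ∈ C, ∀ β ∈ C, α ≠ β → ({α, β} : Finset Omega1) ∈ 𝒜) → C ∈ 𝒜

namespace IsStrongT0Family

variable {𝒜 : Set (Finset Omega1)}

theorem isGoodFamily (h𝒜 : IsStrongT0Family 𝒜) : IsGoodFamily 𝒜 :=
  ⟨h𝒜.1, h𝒜.2.1⟩

theorem isDeterminedByPairs (h𝒜 : IsStrongT0Family 𝒜) : IsDeterminedByPairs 𝒜 :=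
  h𝒜.2.2.2

end IsStrongT0Family

theorem normA_sub_comm (𝒜 : Set (Finset Omega1)) (y z : Omega1 → ℝ) :
    normA 𝒜 (y - z) = normA 𝒜 (z - y) := by
  simp only [normA, Pi.sub_apply, sub_sq_comm]

theorem sq_sub_of_disjoint_support {y z : Omega1 → ℝ}
    (hd : Disjoint (support y) (support z)) (α : Omega1) :
    (y α - z α) ^ 2 = y α ^ 2 + z α ^ 2 := by
  have hyz : y α * z α = 0 := by
    by_contra h
    exact Set.disjoint_left.1 hd (left_ne_zero_of_mul h) (right_ne_zero_of_mul h)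
  linear_combination (-2) * hyz

namespace IsGoodFamily

variable {𝒜 : Set (Finset Omega1)} {y z w : Omega1 → ℝ}

theorem empty_mem (h𝒜 : IsGoodFamily 𝒜) : (∅ : Finset Omega1) ∈ 𝒜 :=
  h𝒜.1 _ (h𝒜.2 (Classical.arbitrary _)) ∅ (Finset.empty_subset _)

theorem exists_isGreatest_sqrt_sum_sq (h𝒜 : IsGoodFamily 𝒜) (hy : (support y).Finite) :
    ∃ A ∈ 𝒜, ↑A ⊆ support y ∧
      IsGreatest {r : ℝ | ∃ A ∈ 𝒜, r = √(∑ α ∈ A, y α ^ 2)} (√(∑ α ∈ A, y α ^ 2)) := by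
  classical
  obtain ⟨A, hA, hmax⟩ := (hy.toFinset.powerset.filter (· ∈ 𝒜)).exists_max_image
    (fun A => ∑ α ∈ A, y α ^ 2) ⟨∅, by simp [h𝒜.empty_mem]⟩
  rw [Finset.mem_filter, Finset.mem_powerset, Set.Finite.subset_toFinset] at hA
  refine ⟨A, hA.2, hA.1, ⟨A, hA.2, rfl⟩, ?_⟩
  rintro _ ⟨B, hB, rfl⟩
  -- only the part of `B` inside the support contributes
  rw [← Finset.sum_filter_of_ne (p := (y · ≠ 0)) fun α _ h => by simpa using h]
  refine Real.sqrt_le_sqrt (hmax _ ?_)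
  simp only [Finset.mem_filter, Finset.mem_powerset]
  exact ⟨fun α hα => by simpa using (Finset.mem_filter.1 hα).2,
    h𝒜.1 B hB _ (Finset.filter_subset _ _)⟩

theorem exists_sqrt_sum_sq_eq_normA (h𝒜 : IsGoodFamily 𝒜) (hy : (support y).Finite) :
    ∃ A ∈ 𝒜, ↑A ⊆ support y ∧ √(∑ α ∈ A, y α ^ 2) = normA 𝒜 y := by
  obtain ⟨A, hA, hAy, hgreatest⟩ := h𝒜.exists_isGreatest_sqrt_sum_sq hy
  exact ⟨A, hA, hAy, hgreatest.csSup_eq.symm⟩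

theorem sqrt_sum_sq_le_normA (h𝒜 : IsGoodFamily 𝒜) (hy : (support y).Finite)
    {A : Finset Omega1} (hA : A ∈ 𝒜) :
    √(∑ α ∈ A, y α ^ 2) ≤ normA 𝒜 y := by
  obtain ⟨_, _, _, hgreatest⟩ := h𝒜.exists_isGreatest_sqrt_sum_sq hy
  exact (hgreatest.2 ⟨A, hA, rfl⟩).trans hgreatest.csSup_eq.ge

theorem sum_sq_le_normA_sq (h𝒜 : IsGoodFamily 𝒜) (hy : (support y).Finite)
    {A : Finset Omega1} (hA : A ∈ 𝒜) :
    ∑ α ∈ A, y α ^ 2 ≤ normA 𝒜 y ^ 2 :=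
  (Real.sqrt_le_iff.1 (h𝒜.sqrt_sum_sq_le_normA hy hA)).2

theorem normA_nonneg (h𝒜 : IsGoodFamily 𝒜) (hy : (support y).Finite) : 0 ≤ normA 𝒜 y := by
  simpa using h𝒜.sqrt_sum_sq_le_normA hy h𝒜.empty_mem

theorem normA_le (h𝒜 : IsGoodFamily 𝒜) {c : ℝ} (h : ∀ A ∈ 𝒜, √(∑ α ∈ A, y α ^ 2) ≤ c) :
    normA 𝒜 y ≤ c :=
  csSup_le ⟨_, ∅, h𝒜.empty_mem, rfl⟩ (by rintro _ ⟨A, hA, rfl⟩; exact h A hA)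

theorem normA_le_normA (h𝒜 : IsGoodFamily 𝒜) (hw : (support w).Finite)
    (h : ∀ α, |y α| ≤ |w α|) :
    normA 𝒜 y ≤ normA 𝒜 w :=
  h𝒜.normA_le fun _ hA =>
    (Real.sqrt_le_sqrt (Finset.sum_le_sum fun α _ => sq_le_sq.2 (h α))).trans
      (h𝒜.sqrt_sum_sq_le_normA hw hA)

theorem normA_eq_zero_iff (h𝒜 : IsGoodFamily 𝒜) (hy : (support y).Finite) :
    normA 𝒜 y = 0 ↔ y = 0 := by
  constructor
  · intro h0
    funext α
    have := h𝒜.sqrt_sum_sq_le_normA hy (h𝒜.2 α)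
    rw [Finset.sum_singleton, Real.sqrt_sq_eq_abs, h0] at this
    exact abs_nonpos_iff.1 this
  · rintro rfl
    exact (h𝒜.normA_le fun _ _ => by simp).antisymm (h𝒜.normA_nonneg (by simp))

theorem le_normA_sub (h𝒜 : IsGoodFamily 𝒜) (hy : (support y).Finite) (hz : (support z).Finite)
    (hd : Disjoint (support y) (support z)) :
    max (normA 𝒜 y) (normA 𝒜 z) ≤ normA 𝒜 (y - z) := by
  have hyz : (support (y - z)).Finite := (hy.union hz).subset (support_sub y z)
  have hsq := sq_sub_of_disjoint_support hd
  refine max_le (h𝒜.normA_le_normA hyz fun α => sq_le_sq.1 ?_)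
    (h𝒜.normA_le_normA hyz fun α => sq_le_sq.1 ?_) <;>
  · rw [Pi.sub_apply, hsq]
    linarith [sq_nonneg (y α), sq_nonneg (z α)]

theorem normA_sub_of_forall_pair_not_mem (h𝒜 : IsGoodFamily 𝒜) (hy : (support y).Finite)
    (hz : (support z).Finite) (hd : Disjoint (support y) (support z))
    (hcross : ∀ α ∈ support y, ∀ β ∈ support z, ({α, β} : Finset Omega1) ∉ 𝒜) :
    normA 𝒜 (y - z) = max (normA 𝒜 y) (normA 𝒜 z) := by
  refine le_antisymm (h𝒜.normA_le fun A hA => ?_) (h𝒜.le_normA_sub hy hz hd)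
  have hvanish : (∀ α ∈ A, y α = 0) ∨ ∀ α ∈ A, z α = 0 := by
    by_contra! h
    obtain ⟨⟨α, hα, hyα⟩, ⟨β, hβ, hzβ⟩⟩ := h
    refine hcross α hyα β hzβ (h𝒜.1 A hA _ ?_)
    simp [Finset.insert_subset_iff, hα, hβ]
  rcases hvanish with hyA | hzA
  · calc √(∑ α ∈ A, (y - z) α ^ 2) = √(∑ α ∈ A, z α ^ 2) :=
          congrArg _ (Finset.sum_congr rfl fun α hα => by simp [hyA α hα])
      _ ≤ _ := (h𝒜.sqrt_sum_sq_le_normA hz hA).trans (le_max_right _ _)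
  · calc √(∑ α ∈ A, (y - z) α ^ 2) = √(∑ α ∈ A, y α ^ 2) :=
          congrArg _ (Finset.sum_congr rfl fun α hα => by simp [hzA α hα])
      _ ≤ _ := (h𝒜.sqrt_sum_sq_le_normA hy hA).trans (le_max_left _ _)

theorem normA_sub_of_forall_pair_mem (h𝒜 : IsGoodFamily 𝒜) (hy : (support y).Finite)
    (hz : (support z).Finite) (hd : Disjoint (support y) (support z))
    (hpairs : IsDeterminedByPairs 𝒜)
    (hcross : ∀ α ∈ support y, ∀ β ∈ support z, ({α, β} : Finset Omega1) ∈ 𝒜) :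
    normA 𝒜 (y - z) = √(normA 𝒜 y ^ 2 + normA 𝒜 z ^ 2) := by
  have hsum (A : Finset Omega1) :
      ∑ α ∈ A, (y - z) α ^ 2 = ∑ α ∈ A, y α ^ 2 + ∑ α ∈ A, z α ^ 2 := by
    simp only [Pi.sub_apply, sq_sub_of_disjoint_support hd, Finset.sum_add_distrib]
  refine le_antisymm (h𝒜.normA_le fun A hA => ?_) ?_
  · rw [hsum]
    exact Real.sqrt_le_sqrt
      (add_le_add (h𝒜.sum_sq_le_normA_sq hy hA) (h𝒜.sum_sq_le_normA_sq hz hA))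
  obtain ⟨A, hA, hAy, hyA⟩ := h𝒜.exists_sqrt_sum_sq_eq_normA hy
  obtain ⟨B, hB, hBz, hzB⟩ := h𝒜.exists_sqrt_sum_sq_eq_normA hz
  have hpair_mem {α β : Omega1} {C : Finset Omega1} (hC : C ∈ 𝒜) (hα : α ∈ C) (hβ : β ∈ C) :
      ({α, β} : Finset Omega1) ∈ 𝒜 :=
    h𝒜.1 C hC _ (by simp [Finset.insert_subset_iff, hα, hβ])
  have hAB : A ∪ B ∈ 𝒜 := hpairs _ fun α hα β hβ _ => by
    rcases Finset.mem_union.1 hα with hα | hα <;> rcases Finset.mem_union.1 hβ with hβ | hβ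
    · exact hpair_mem hA hα hβ
    · exact hcross α (hAy hα) β (hBz hβ)
    · exact Finset.pair_comm α β ▸ hcross β (hAy hβ) α (hBz hα)
    · exact hpair_mem hB hα hβ
  calc √(normA 𝒜 y ^ 2 + normA 𝒜 z ^ 2) = √(∑ α ∈ A, y α ^ 2 + ∑ α ∈ B, z α ^ 2) := by
        rw [← hyA, ← hzB, Real.sq_sqrt (by positivity), Real.sq_sqrt (by positivity)]
    _ ≤ √(∑ α ∈ A ∪ B, (y - z) α ^ 2) := by
        rw [hsum]
        gcongr
        exacts [Finset.subset_union_left, Finset.subset_union_right]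
    _ ≤ normA 𝒜 (y - z) :=
        h𝒜.sqrt_sum_sq_le_normA ((hy.union hz).subset (support_sub y z)) hAB

end IsGoodFamily

theorem IsStrongT0Family.exists_pairs_of_disjoint_support {𝒜 : Set (Finset Omega1)}
    (h𝒜 : IsStrongT0Family 𝒜) (x : Omega1 → Omega1 → ℝ) (hfin : ∀ ξ, (support (x ξ)).Finite)
    (hdisj : ∀ ξ η : Omega1, ξ ≠ η → Disjoint (support (x ξ)) (support (x η)))
    (hzero : (∀ ξ, x ξ = 0) ∨ ∀ ξ, x ξ ≠ 0) :
    (∃ ξ η : Omega1, ξ ≠ η ∧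
        ∀ α ∈ support (x ξ), ∀ β ∈ support (x η), ({α, β} : Finset Omega1) ∉ 𝒜) ∧
      (∃ ξ η : Omega1, ξ ≠ η ∧
        ∀ α ∈ support (x ξ), ∀ β ∈ support (x η), ({α, β} : Finset Omega1) ∈ 𝒜) := by
  rcases hzero with hzero | hne
  · obtain ⟨⟨ξ, η, hξη, -⟩, -⟩ := h𝒜.2.2.1 (fun ξ => {ξ}) Finset.singleton_injective
      fun ξ η h => Finset.disjoint_singleton.2 h
    simp only [hzero, support_zero, Set.mem_empty_iff_false, IsEmpty.forall_iff, implies_true,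
      and_true]
    exact ⟨⟨ξ, η, hξη⟩, ⟨ξ, η, hξη⟩⟩
  set F : Omega1 → Finset Omega1 := fun ξ => (hfin ξ).toFinset
  have hFdisj : ∀ ξ η, ξ ≠ η → Disjoint (F ξ) (F η) := fun ξ η h => by
    simpa [F, ← Finset.disjoint_coe] using hdisj ξ η h
  have hFinj : Injective F := by
    intro ξ η h
    by_contra hξη
    have hempty : F η = ∅ := Finset.disjoint_self_iff_empty _ |>.1 (h ▸ hFdisj ξ η hξη)
    exact hne η (support_eq_empty_iff.1 (by simpa [F] using hempty))
  simpa [F] using h𝒜.2.2.1 F hFinj hFdisj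

theorem exists_lt_normA_sub_eq {𝒜 : Set (Finset Omega1)} {x : Omega1 → Omega1 → ℝ} {c : ℝ}
    {ξ η : Omega1} (hξη : ξ ≠ η) (h : normA 𝒜 (x ξ - x η) = c) :
    ∃ ξ η : Omega1, ξ < η ∧ normA 𝒜 (x ξ - x η) = c := by
  rcases hξη.lt_or_gt with hlt | hlt
  · exact ⟨ξ, η, hlt, h⟩
  · exact ⟨η, ξ, hlt, normA_sub_comm 𝒜 _ _ ▸ h⟩

/-- for disjointly supported finitely supported vectors of
constant `𝒜`-norm `r`, some pair is at distance `√2·r` and some pair at distance `r`. -/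
theorem stmt10 (𝒜 : Set (Finset Omega1)) (h𝒜 : IsStrongT0Family 𝒜) (r : ℝ)
    (x : Omega1 → Omega1 → ℝ)
    (hfin : ∀ ξ, (Function.support (x ξ)).Finite)
    (hdisj : ∀ ξ η : Omega1, ξ ≠ η →
      Disjoint (Function.support (x ξ)) (Function.support (x η)))
    (hnorm : ∀ ξ, normA 𝒜 (x ξ) = r) :
    (∃ ξ η : Omega1, ξ < η ∧ normA 𝒜 (x ξ - x η) = Real.sqrt 2 * r) ∧
    (∃ ξ η : Omega1, ξ < η ∧ normA 𝒜 (x ξ - x η) = r) := by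
  have h𝒜good := h𝒜.isGoodFamily
  have hr : 0 ≤ r := hnorm (Classical.arbitrary _) ▸ h𝒜good.normA_nonneg (hfin _)
  have hzero : (∀ ξ, x ξ = 0) ∨ ∀ ξ, x ξ ≠ 0 := by
    by_cases hr0 : r = 0 <;> simp [← h𝒜good.normA_eq_zero_iff (hfin _), hnorm, hr0]
  obtain ⟨⟨ξ, η, hξη, hnot⟩, ⟨ξ', η', hξη', hmem⟩⟩ :=
    h𝒜.exists_pairs_of_disjoint_support x hfin hdisj hzero
  refine ⟨exists_lt_normA_sub_eq hξη' ?_, exists_lt_normA_sub_eq hξη ?_⟩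
  · rw [h𝒜good.normA_sub_of_forall_pair_mem (hfin ξ') (hfin η') (hdisj ξ' η' hξη')
      h𝒜.isDeterminedByPairs hmem, hnorm, hnorm, ← two_mul, Real.sqrt_mul zero_le_two,
      Real.sqrt_sq hr]
  · rw [h𝒜good.normA_sub_of_forall_pair_not_mem (hfin ξ) (hfin η) (hdisj ξ η hξη) hnot, hnorm,
      hnorm, max_self]
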